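/- Let A be an n×n real matrix with symmetric part B = (A+Aᵀ)/2 and skew-symmetric part C = (A−Aᵀ)/2, and let û ∈ ℝⁿ with û·𝟏 = 1. Then the following are equivalent: (i) û satisfies both Aû = m̄(û)𝟏 (û is a replicator equilibrium) and Bû = μ𝟏 for some μ ∈ ℝ (û is a constrained critical point of the mean fitness); (ii) Bû = m̄(û)𝟏 and Cû = 0. Moreover, in case (i) the multiplier necessarily equals μ = m̄(û). -/

import Mathlib

/-!
The skew part contributes nothing to the quadratic form, so pairing `Bû = μ𝟏` with `û`
gives `μ = û ⬝ᵥ Bû = m̄(û)`. Since `Aû = Bû + Cû`, the replicator condition `Aû = m̄(û)𝟏`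
then holds exactly when `Cû = 0`.
-/

open Matrix

namespace Matrix

variable {n K : Type*}

theorem symmPart_add_skewPart [Field K] [NeZero (2 : K)] (A : Matrix n n K) :
    (1 / 2 : K) • (A + Aᵀ) + (1 / 2 : K) • (A - Aᵀ) = A := by
  rw [← smul_add, add_add_sub_cancel, ← two_smul K A, smul_smul,
    one_div_mul_cancel two_ne_zero, one_smul]

theorem dotProduct_symmPart_mulVec_self [Fintype n] [Field K] [NeZero (2 : K)] (A : Matrix n n K)
    (u : n → K) : u ⬝ᵥ ((1 / 2 : K) • (A + Aᵀ)) *ᵥ u = u ⬝ᵥ A *ᵥ u := by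
  rw [smul_mulVec, dotProduct_smul, add_mulVec, dotProduct_add, dotProduct_transpose_mulVec,
    ← two_mul, smul_eq_mul, ← mul_assoc, one_div_mul_cancel two_ne_zero, one_mul]

theorem eq_dotProduct_mulVec_of_mulVec_eq_const [Fintype n] [CommSemiring K] {M : Matrix n n K}
    {u : n → K} (hu : u ⬝ᵥ (fun _ => 1) = 1) {μ : K} (hM : M *ᵥ u = fun _ => μ) :
    μ = u ⬝ᵥ M *ᵥ u := by
  have hconst : (fun _ => μ) = μ • (fun _ : n => (1 : K)) := by
    ext; simp
  rw [hM, hconst, dotProduct_smul, hu, smul_eq_mul, mul_one]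

end Matrix

/-- For `A = B + C` (`B` symmetric part, `C` skew-symmetric part) and `û`
with `û·𝟏 = 1`, the following are equivalent: (i) `Aû = m̄(û)𝟏` and `Bû = μ𝟏` for some `μ`;
(ii) `Bû = m̄(û)𝟏` and `Cû = 0`. Moreover, in case (i) the multiplier necessarily equals
`μ = m̄(û)`, where `m̄(û) = û·Aû`. -/
theorem stmt10 (n : ℕ) (A B C : Matrix (Fin n) (Fin n) ℝ)
    (hB : B = (1 / 2 : ℝ) • (A + Aᵀ)) (hC : C = (1 / 2 : ℝ) • (A - Aᵀ))
    (uh : Fin n → ℝ) (h1 : uh ⬝ᵥ (fun _ => 1) = 1) :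
    ((A.mulVec uh = (fun _ => uh ⬝ᵥ A.mulVec uh) ∧ ∃ μ : ℝ, B.mulVec uh = (fun _ => μ)) ↔
      (B.mulVec uh = (fun _ => uh ⬝ᵥ A.mulVec uh) ∧ C.mulVec uh = 0)) ∧
    (∀ μ : ℝ, A.mulVec uh = (fun _ => uh ⬝ᵥ A.mulVec uh) →
      B.mulVec uh = (fun _ => μ) → μ = uh ⬝ᵥ A.mulVec uh) := by
  have hsplit : A *ᵥ uh = B *ᵥ uh + C *ᵥ uh := by
    rw [← add_mulVec, hB, hC, symmPart_add_skewPart]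
  have multiplier (μ : ℝ) (hμ : B *ᵥ uh = fun _ => μ) : μ = uh ⬝ᵥ A *ᵥ uh := by
    rw [eq_dotProduct_mulVec_of_mulVec_eq_const h1 hμ, hB, dotProduct_symmPart_mulVec_self]
  refine ⟨⟨?_, ?_⟩, fun μ _ => multiplier μ⟩
  · rintro ⟨hAu, μ, hμ⟩
    obtain rfl := multiplier μ hμ
    rw [hAu, hμ, left_eq_add] at hsplit
    exact ⟨hμ, hsplit⟩
  · rintro ⟨hBu, hCu⟩
    exact ⟨hsplit.trans (by rw [hBu, hCu, add_zero]), _, hBu⟩
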